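/- arXiv:2108.06541 — 5 statements merged into one kernel-verified Lean document; each statement's English description precedes it below -/
import Mathlib

section
/- Let G be a finite group, a a commuting n-tuple in G, R ≤ C_G(a), and for each i let k_i be the smallest positive integer with a_i^{k_i} ∈ R. Then the map ω : ev_a⁻¹(R) → (ℤ/ℓ)ⁿ × R given by ω(t, z) = (t, a_1^{t_1 − k_1 t_1} ⋯ a_n^{t_n − k_n t_n} · z) is a well-defined group isomorphism. -/
/-!
Write `P t = ∏ aᵢ^{tᵢ}` for `t ∈ (ℤ/ℓ)ⁿ`. Since the `aᵢ` commute and `aᵢ^ℓ = 1`, `P` is a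
homomorphism, so the `G`-component of `ω(t,z)` is `P(t - kt) z = P(kt)⁻¹ · P(t) z`. The factor
`P(kt) = ∏ (aᵢ^{kᵢ})^{tᵢ}` lies in `R`, hence `P(t) z ∈ R ↔ P(t - kt) z ∈ R`, which gives a
bijection with inverse `(t, r) ↦ (t, P(t - kt)⁻¹ r)`. Multiplicativity holds because the
second coordinate of an element of `ev_a⁻¹(R)` centralizes the `aᵢ`.
-/

open Multiplicative

theorem List.prod_ofFn_mul_of_commute {M : Type*} [Monoid M] :
    ∀ {n : ℕ} (f g : Fin n → M), (∀ i j, Commute (g i) (f j)) →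
      (List.ofFn fun i => f i * g i).prod = (List.ofFn f).prod * (List.ofFn g).prod
  | 0, _, _, _ => by simp
  | n + 1, f, g, h => by
    have hc : Commute (g 0) (List.ofFn fun i => f i.succ).prod :=
      Commute.list_prod_right _ _ fun x hx => by
        obtain ⟨i, rfl⟩ := List.mem_ofFn.mp hx
        exact h 0 _
    simp only [List.ofFn_succ, List.prod_cons]
    rw [List.prod_ofFn_mul_of_commute (fun i => f i.succ) (fun i => g i.succ) fun i j => h _ _,
      mul_assoc, mul_assoc, ← mul_assoc (g 0), hc.eq, mul_assoc]

theorem pow_val_eq_pow_of_natCast_eq {G : Type*} [Monoid G] {ℓ : ℕ} {g : G} (hg : g ^ ℓ = 1)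
    {x : ZMod ℓ} {m : ℕ} (h : (m : ZMod ℓ) = x) : g ^ x.val = g ^ m := by
  subst h
  rw [ZMod.val_natCast, ← pow_mod_orderOf, ← pow_mod_orderOf g m,
    Nat.mod_mod_of_dvd _ (orderOf_dvd_of_pow_eq_one hg)]

section PowProd

variable {G : Type*} [Group G] {n ℓ : ℕ}

def powProd (a : Fin n → G) (t : Fin n → ZMod ℓ) : G :=
  (List.ofFn fun i => a i ^ (t i).val).prod

theorem powProd_mem (a : Fin n → G) (H : Subgroup G) (ha : ∀ i, a i ∈ H)
    (t : Fin n → ZMod ℓ) : powProd a t ∈ H :=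
  H.list_prod_mem fun x hx => by
    obtain ⟨i, rfl⟩ := List.mem_ofFn.mp hx
    exact pow_mem (ha i) _

theorem Commute.powProd_right {z : G} {a : Fin n → G} (h : ∀ i, Commute z (a i))
    (t : Fin n → ZMod ℓ) : Commute z (powProd a t) :=
  Commute.list_prod_right _ _ fun x hx => by
    obtain ⟨i, rfl⟩ := List.mem_ofFn.mp hx
    exact (h i).pow_right _

variable [NeZero ℓ] {a : Fin n → G}

theorem powProd_add (hcomm : ∀ i j, Commute (a i) (a j)) (hℓ : ∀ i, a i ^ ℓ = 1)
    (t s : Fin n → ZMod ℓ) :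
    powProd a (t + s) = powProd a t * powProd a s := by
  rw [powProd, powProd, powProd,
    ← List.prod_ofFn_mul_of_commute _ _ fun i j => (hcomm i j).pow_pow _ _]
  congr 1
  refine congrArg List.ofFn (funext fun i => ?_)
  rw [← pow_add]
  exact pow_val_eq_pow_of_natCast_eq (hℓ i) (by simp)

theorem powProd_natCast_mul (hℓ : ∀ i, a i ^ ℓ = 1) (k : Fin n → ℕ) (t : Fin n → ZMod ℓ) :
    powProd a (fun i => (k i : ZMod ℓ) * t i) = powProd (fun i => a i ^ k i) t := by
  refine congrArg (List.prod ∘ List.ofFn) (funext fun i => ?_)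
  rw [← pow_mul]
  exact pow_val_eq_pow_of_natCast_eq (hℓ i) (by simp)

theorem powProd_mul_inv_powProd_sub_mem (hcomm : ∀ i j, Commute (a i) (a j))
    (hℓ : ∀ i, a i ^ ℓ = 1) {R : Subgroup G} {k : Fin n → ℕ}
    (hk : ∀ i, a i ^ k i ∈ R) (t : Fin n → ZMod ℓ) :
    powProd a t * (powProd a fun i => t i - (k i : ZMod ℓ) * t i)⁻¹ ∈ R := by
  have hsplit : t = (fun i => (k i : ZMod ℓ) * t i) + fun i => t i - (k i : ZMod ℓ) * t i := by
    ext i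
    simp
  rw [hsplit, powProd_add hcomm hℓ, ← hsplit, mul_inv_cancel_right,
    powProd_natCast_mul hℓ]
  exact powProd_mem _ R hk t

end PowProd

section Winding

variable {G : Type*} [Group G] {n ℓ : ℕ}

/-- `(ℤ/ℓ)ⁿ` is written multiplicatively so that the product on `(ℤ/ℓ)ⁿ × G` is the direct
product. -/
def windingMap (a : Fin n → G) (k : Fin n → ℕ) (p : (Fin n → Multiplicative (ZMod ℓ)) × G) :
    (Fin n → Multiplicative (ZMod ℓ)) × G :=
  (p.1, powProd a (fun i => toAdd (p.1 i) - (k i : ZMod ℓ) * toAdd (p.1 i)) * p.2)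

def evPreimage (a : Fin n → G) (R : Subgroup G) : Set ((Fin n → Multiplicative (ZMod ℓ)) × G) :=
  {p | p.2 ∈ Subgroup.centralizer (Set.range a) ∧ powProd a (fun i => toAdd (p.1 i)) * p.2 ∈ R}

variable {a : Fin n → G}

theorem mem_centralizer_range_of_commute (hcomm : ∀ i j, Commute (a i) (a j)) (i : Fin n) :
    a i ∈ Subgroup.centralizer (Set.range a) :=
  Subgroup.mem_centralizer_iff.mpr <| by
    rintro _ ⟨j, rfl⟩
    exact (hcomm j i).eq

variable [NeZero ℓ]

theorem bijOn_windingMap (hcomm : ∀ i j, Commute (a i) (a j)) (hℓ : ∀ i, a i ^ ℓ = 1)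
    {R : Subgroup G} (hR : R ≤ Subgroup.centralizer (Set.range a)) {k : Fin n → ℕ}
    (hk : ∀ i, a i ^ k i ∈ R) :
    Set.BijOn (windingMap (ℓ := ℓ) a k) (evPreimage a R) {p | p.2 ∈ R} := by
  refine ⟨?mapsTo, ?injOn, ?surjOn⟩
  case mapsTo =>
    rintro ⟨t, z⟩ ⟨-, hz⟩
    have hR' := powProd_mul_inv_powProd_sub_mem hcomm hℓ hk fun i => toAdd (t i)
    simpa [windingMap, mul_assoc] using R.mul_mem (R.inv_mem hR') hz
  case injOn =>
    rintro ⟨t, z⟩ - ⟨s, w⟩ - h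
    simp only [windingMap, Prod.mk.injEq] at h
    obtain ⟨rfl, h⟩ := h
    rw [mul_left_cancel h]
  case surjOn =>
    rintro ⟨t, r⟩ hr
    set B := powProd a fun i => toAdd (t i) - (k i : ZMod ℓ) * toAdd (t i)
    have hB : B ∈ Subgroup.centralizer (Set.range a) :=
      powProd_mem a _ (mem_centralizer_range_of_commute hcomm) _
    refine ⟨(t, B⁻¹ * r), ⟨?_, ?_⟩, by simp [windingMap, B]⟩
    · exact Subgroup.mul_mem _ (Subgroup.inv_mem _ hB) (hR hr)
    · rw [← mul_assoc]
      exact R.mul_mem (powProd_mul_inv_powProd_sub_mem hcomm hℓ hk _) hr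

theorem windingMap_mul (hcomm : ∀ i j, Commute (a i) (a j)) (hℓ : ∀ i, a i ^ ℓ = 1)
    (k : Fin n → ℕ) {p : (Fin n → Multiplicative (ZMod ℓ)) × G}
    (hp : p.2 ∈ Subgroup.centralizer (Set.range a)) (q : (Fin n → Multiplicative (ZMod ℓ)) × G) :
    windingMap a k (p * q) = windingMap a k p * windingMap a k q := by
  obtain ⟨t, z⟩ := p
  obtain ⟨s, w⟩ := q
  have hexp : (fun i => toAdd ((t * s) i) - (k i : ZMod ℓ) * toAdd ((t * s) i)) =
      (fun i => toAdd (t i) - (k i : ZMod ℓ) * toAdd (t i)) +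
        fun i => toAdd (s i) - (k i : ZMod ℓ) * toAdd (s i) := by
    ext i
    simp only [Pi.mul_apply, toAdd_mul, Pi.add_apply]
    ring
  have hz : Commute z (powProd a fun i => toAdd (s i) - (k i : ZMod ℓ) * toAdd (s i)) :=
    Commute.powProd_right (fun i => (Subgroup.mem_centralizer_iff.mp hp (a i) ⟨i, rfl⟩).symm) _
  simp only [windingMap, Prod.mk_mul_mk, hexp, powProd_add hcomm hℓ]
  rw [mul_assoc, mul_assoc, ← mul_assoc _ z, ← hz.eq, mul_assoc]

end Winding

/-- The winding map `ω(t,z) = (t, a₁^{t₁−k₁t₁} ⋯ a_n^{t_n−k_nt_n}·z)` is a well-defined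
group isomorphism from `ev_a⁻¹(R)` onto `(ℤ/ℓ)ⁿ × R`: it is a bijection between the two
subsets of `(ℤ/ℓ)ⁿ × C_G(a)` (viewed inside `(ℤ/ℓ)ⁿ × G`) and is multiplicative on
`ev_a⁻¹(R)`. -/
theorem winding_iso {G : Type*} [Group G] [Fintype G] {n ℓ : ℕ}
    (hpos : 0 < ℓ) (hdvd : Fintype.card G ∣ ℓ)
    (a : Fin n → G) (hcomm : ∀ i j, Commute (a i) (a j))
    (R : Subgroup G) (hR : R ≤ Subgroup.centralizer (Set.range a))
    (k : Fin n → ℕ) (hk : ∀ i, IsLeast {m : ℕ | 0 < m ∧ a i ^ m ∈ R} (k i)) :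
    Set.BijOn
      (fun p : (Fin n → Multiplicative (ZMod ℓ)) × G =>
        (p.1, (List.ofFn fun i =>
          a i ^ (Multiplicative.toAdd (p.1 i) - (k i : ZMod ℓ) * Multiplicative.toAdd (p.1 i)).val).prod
            * p.2))
      {p : (Fin n → Multiplicative (ZMod ℓ)) × G |
        p.2 ∈ Subgroup.centralizer (Set.range a) ∧
        (List.ofFn fun i => a i ^ (Multiplicative.toAdd (p.1 i)).val).prod * p.2 ∈ R}
      {p : (Fin n → Multiplicative (ZMod ℓ)) × G | p.2 ∈ R} ∧
    ∀ p q : (Fin n → Multiplicative (ZMod ℓ)) × G,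
      (p.2 ∈ Subgroup.centralizer (Set.range a) ∧
        (List.ofFn fun i => a i ^ (Multiplicative.toAdd (p.1 i)).val).prod * p.2 ∈ R) →
      (q.2 ∈ Subgroup.centralizer (Set.range a) ∧
        (List.ofFn fun i => a i ^ (Multiplicative.toAdd (q.1 i)).val).prod * q.2 ∈ R) →
      (fun p : (Fin n → Multiplicative (ZMod ℓ)) × G =>
        (p.1, (List.ofFn fun i =>
          a i ^ (Multiplicative.toAdd (p.1 i) - (k i : ZMod ℓ) * Multiplicative.toAdd (p.1 i)).val).prod
            * p.2)) (p * q)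
        = (fun p : (Fin n → Multiplicative (ZMod ℓ)) × G =>
        (p.1, (List.ofFn fun i =>
          a i ^ (Multiplicative.toAdd (p.1 i) - (k i : ZMod ℓ) * Multiplicative.toAdd (p.1 i)).val).prod
            * p.2)) p *
          (fun p : (Fin n → Multiplicative (ZMod ℓ)) × G =>
        (p.1, (List.ofFn fun i =>
          a i ^ (Multiplicative.toAdd (p.1 i) - (k i : ZMod ℓ) * Multiplicative.toAdd (p.1 i)).val).prod
            * p.2)) q := by
  have : NeZero ℓ := ⟨hpos.ne'⟩
  have hℓ : ∀ i, a i ^ ℓ = 1 := fun i =>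
    orderOf_dvd_iff_pow_eq_one.mp (orderOf_dvd_card.trans hdvd)
  exact ⟨bijOn_windingMap hcomm hℓ hR fun i => (hk i).1.2,
    fun p q hp _ => windingMap_mul hcomm hℓ k hp.1 q⟩
end

section
/- Let G, H be finite groups, a a commuting n-tuple in G, b a commuting n-tuple in H, R ≤ C_G(a) a subgroup with a_i ∈ R for all i, and φ : R → H a homomorphism. Then the set of (a, b)-fixed points of the transitive biset [R,φ]_{C_G(a)}^H is nonempty if and only if b is H-conjugate to φ(a) (componentwise), and in that case it forms a single (C_G(a), C_H(b))-orbit. -/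
open MulOpposite

/-- Fixed points of a transitive biset `[R,φ]` from `C_G(a)` to `H` (with `a ⊆ R`):
for a commuting tuple `b` in `H`, the `(a,b)`-fixed points are nonempty iff `b` is
`H`-conjugate to `φ(a)`, and in that case they form a single
`(C_G(a), C_H(b))`-orbit. The transitive biset `[R,φ]` is characterised abstractly by a
point `x₀` generating it with the prescribed stabilizer relation. -/
theorem fixed_points_transitive_biset {G H M : Type*} [Group G] [Group H]
    [Fintype G] [Fintype H]
    {n : ℕ} (a : Fin n → G) (hca : ∀ i j, Commute (a i) (a j))
    (R : Subgroup G) (hR : R ≤ Subgroup.centralizer (Set.range a))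
    (hain : ∀ i, a i ∈ R) (φ : R →* H)
    [MulAction (Subgroup.centralizer (Set.range a)) M] [MulAction Hᵐᵒᵖ M]
    [SMulCommClass (Subgroup.centralizer (Set.range a)) Hᵐᵒᵖ M]
    (hfree : ∀ (m : M) (h : H), op h • m = m → h = 1)
    (x₀ : M)
    (htrans : ∀ m : M, ∃ (g : Subgroup.centralizer (Set.range a)) (h : H),
      m = g • (op h • x₀))
    (hstab : ∀ (g : Subgroup.centralizer (Set.range a)) (h : H),
      g • x₀ = op h • x₀ ↔ ∃ hg : (g : G) ∈ R, h = φ ⟨(g : G), hg⟩)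
    (b : Fin n → H) (hcb : ∀ i j, Commute (b i) (b j)) :
    ((∃ m : M, ∀ i,
        (⟨a i, hR (hain i)⟩ : Subgroup.centralizer (Set.range a)) • m = op (b i) • m) ↔
      ∃ h : H, ∀ i, h⁻¹ * φ ⟨a i, hain i⟩ * h = b i) ∧
    (∀ m m' : M,
      (∀ i, (⟨a i, hR (hain i)⟩ : Subgroup.centralizer (Set.range a)) • m = op (b i) • m) →
      (∀ i, (⟨a i, hR (hain i)⟩ : Subgroup.centralizer (Set.range a)) • m' = op (b i) • m') →
      ∃ (g : Subgroup.centralizer (Set.range a)) (h : H),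
        h ∈ Subgroup.centralizer (Set.range b) ∧ m' = g • (op h • m)) := by

  have hcancel : ∀ (x : M) (h1 h2 : H), op h1 • x = op h2 • x → h1 = h2 := by
    intro x h1 h2 he
    have h0 : op (h1 * h2⁻¹) • x = x := by
      rw [show op (h1 * h2⁻¹) = op h2⁻¹ * op h1 from rfl, mul_smul, he, ← mul_smul]
      simp
    have := hfree x _ h0
    rw [mul_inv_eq_one] at this
    exact this
  have hcomm : ∀ i (g : Subgroup.centralizer (Set.range a)) (m : M),
      (⟨a i, hR (hain i)⟩ : Subgroup.centralizer (Set.range a)) • g • m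
        = g • (⟨a i, hR (hain i)⟩ : Subgroup.centralizer (Set.range a)) • m := by
    intro i g m
    rw [← mul_smul, ← mul_smul]
    congr 1
    exact Subtype.ext (g.2 (a i) ⟨i, rfl⟩)
  have hax : ∀ i, (⟨a i, hR (hain i)⟩ : Subgroup.centralizer (Set.range a)) • x₀
      = op (φ ⟨a i, hain i⟩) • x₀ := by
    intro i
    exact (hstab ⟨a i, hR (hain i)⟩ (φ ⟨a i, hain i⟩)).mpr ⟨hain i, rfl⟩
  have hkey : ∀ (g : Subgroup.centralizer (Set.range a)) (h : H) (i : Fin n),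
      ((⟨a i, hR (hain i)⟩ : Subgroup.centralizer (Set.range a)) • (g • op h • x₀)
        = op (b i) • (g • op h • x₀)) ↔ φ ⟨a i, hain i⟩ * h = h * b i := by
    intro g h i
    have l1 : (⟨a i, hR (hain i)⟩ : Subgroup.centralizer (Set.range a)) • (g • op h • x₀)
        = g • op (φ ⟨a i, hain i⟩ * h) • x₀ := by
      rw [hcomm, smul_comm (⟨a i, hR (hain i)⟩ : Subgroup.centralizer (Set.range a)) (op h) x₀,
        hax, ← mul_smul]
      rfl
    have l2 : op (b i) • (g • op h • x₀) = g • op (h * b i) • x₀ := by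
      rw [← smul_comm g (op (b i)) (op h • x₀), ← mul_smul]
      rfl
    rw [l1, l2]
    constructor
    · intro he
      exact hcancel x₀ _ _ (smul_left_cancel g he)
    · intro he
      rw [he]
  constructor
  · constructor
    · rintro ⟨m, hm⟩
      obtain ⟨g, h, rfl⟩ := htrans m
      refine ⟨h, fun i => ?_⟩
      have hk := (hkey g h i).mp (hm i)
      rw [mul_assoc, hk, ← mul_assoc, inv_mul_cancel, one_mul]
    · rintro ⟨h, hh⟩
      refine ⟨op h • x₀, fun i => ?_⟩
      have : (⟨a i, hR (hain i)⟩ : Subgroup.centralizer (Set.range a)) •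
          ((1 : Subgroup.centralizer (Set.range a)) • op h • x₀)
          = op (b i) • ((1 : Subgroup.centralizer (Set.range a)) • op h • x₀) := by
        rw [hkey]
        rw [← hh i]
        group
      simpa using this
  · intro m m' hm hm'
    obtain ⟨g, h, rfl⟩ := htrans m
    obtain ⟨g', h', rfl⟩ := htrans m'
    have k1 : ∀ i, φ ⟨a i, hain i⟩ * h = h * b i := fun i => (hkey g h i).mp (hm i)
    have k2 : ∀ i, φ ⟨a i, hain i⟩ * h' = h' * b i := fun i => (hkey g' h' i).mp (hm' i)
    refine ⟨g' * g⁻¹, h⁻¹ * h', ?_, ?_⟩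
    · rw [Subgroup.mem_centralizer_iff]
      rintro x ⟨i, rfl⟩
      have e1 : b i * h⁻¹ = h⁻¹ * φ ⟨a i, hain i⟩ := by
        rw [eq_inv_mul_iff_mul_eq, ← mul_assoc, ← k1 i, mul_assoc, mul_inv_cancel, mul_one]
      calc b i * (h⁻¹ * h') = (b i * h⁻¹) * h' := by rw [mul_assoc]
        _ = h⁻¹ * (φ ⟨a i, hain i⟩ * h') := by rw [e1, mul_assoc]
        _ = h⁻¹ * (h' * b i) := by rw [k2 i]
        _ = (h⁻¹ * h') * b i := by rw [mul_assoc]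
    · have hop : op (h⁻¹ * h') * op h = op h' := by
        rw [← op_mul, ← mul_assoc, mul_inv_cancel, one_mul]
      have hc : op (h⁻¹ * h') • (g • op h • x₀) = g • op h' • x₀ := by
        rw [← smul_comm g (op (h⁻¹ * h')) (op h • x₀), ← mul_smul, hop]
      rw [hc, ← mul_smul, mul_assoc, inv_mul_cancel, mul_one]
end

section
/- Let G be a finite group, H ≤ G a subgroup, and a a commuting n-tuple in G. Consider the (G,H)-biset M = G (left G-action and right H-action by multiplication). For a commuting n-tuple b in H, the (a,b)-fixed points {g ∈ G | a_i g = g b_i for all i} = {g ∈ G | g⁻¹ a g = b} form either the empty set or a single transitive (C_G(a), C_H(b))-orbit; in the latter case, for any g₀ in the set, this biset is isomorphic to the transitive biset [C_G(a) ∩ g₀Hg₀⁻¹, c_{g₀}] from C_G(a) to C_H(b), and moreover C_G(a) ∩ g₀Hg₀⁻¹ = C_{g₀Hg₀⁻¹}(a). -/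
/-- For `H ≤ G` and the `(G,H)`-biset `G`, the `(a,b)`-fixed points
`{g | aᵢ g = g bᵢ}` form either the empty set or a single `(C_G(a), C_H(b))`-orbit;
for `g₀` in the set the orbit is the transitive biset `[C_G(a) ∩ g₀Hg₀⁻¹, c_{g₀}]`
(expressed by transitivity and the stabilizer relation `z·g₀ = g₀·h ↔
z ∈ C_G(a) ∩ g₀Hg₀⁻¹ ∧ h = g₀⁻¹zg₀`), and
`C_G(a) ∩ g₀Hg₀⁻¹ = C_{g₀Hg₀⁻¹}(a)`. -/
theorem transfer_fixed_points {G : Type*} [Group G] [Fintype G] (H : Subgroup G)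
    {n : ℕ} (a b : Fin n → G)
    (hca : ∀ i j, Commute (a i) (a j)) (hcb : ∀ i j, Commute (b i) (b j))
    (hb : ∀ i, b i ∈ H) :
    (∀ g₀ ∈ {g : G | ∀ i, a i * g = g * b i}, ∀ g' ∈ {g : G | ∀ i, a i * g = g * b i},
      ∃ z h : G, z ∈ Subgroup.centralizer (Set.range a) ∧
        (h ∈ H ∧ h ∈ Subgroup.centralizer (Set.range b)) ∧ g' = z * g₀ * h) ∧
    (∀ g₀ ∈ {g : G | ∀ i, a i * g = g * b i},
      (∀ z ∈ Subgroup.centralizer (Set.range a), ∀ h ∈ H,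
        (z * g₀ = g₀ * h ↔
          z ∈ Subgroup.centralizer (Set.range a) ⊓
              Subgroup.map (MulAut.conj g₀).toMonoidHom H ∧
            h = g₀⁻¹ * z * g₀)) ∧
      ((Subgroup.centralizer (Set.range a) ⊓
          Subgroup.map (MulAut.conj g₀).toMonoidHom H : Subgroup G) : Set G)
        = {x : G | x ∈ Subgroup.map (MulAut.conj g₀).toMonoidHom H ∧
            ∀ i, Commute x (a i)}) := by
  constructor
  · intro g₀ hg₀ g' hg'
    refine ⟨g' * g₀⁻¹, 1, ?_, ⟨one_mem _, one_mem _⟩, by group⟩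
    rw [Subgroup.mem_centralizer_iff]
    rintro y ⟨i, rfl⟩
    have h0 := hg₀ i
    have h1 := hg' i
    have : a i * g₀ * g₀⁻¹ = g₀ * b i * g₀⁻¹ := by rw [h0]
    calc a i * (g' * g₀⁻¹) = (g' * b i) * g₀⁻¹ := by rw [← mul_assoc, h1]
      _ = g' * (g₀⁻¹ * (a i * g₀)) * g₀⁻¹ := by rw [h0]; group
      _ = (g' * g₀⁻¹) * a i := by group
  · intro g₀ hg₀
    constructor
    · intro z hz h hh
      constructor
      · intro he
        have hz' : h = g₀⁻¹ * z * g₀ := by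
          rw [mul_assoc, he]; group
        refine ⟨⟨hz, ⟨h, hh, ?_⟩⟩, hz'⟩
        simp [MulAut.conj, hz']
        group
      · rintro ⟨-, rfl⟩
        group
    · ext x
      simp only [Subgroup.coe_inf, Set.mem_inter_iff, SetLike.mem_coe, Set.mem_setOf_eq,
        Subgroup.mem_centralizer_iff]
      constructor
      · rintro ⟨hc, hm⟩
        exact ⟨hm, fun i => (hc (a i) ⟨i, rfl⟩).symm⟩
      · rintro ⟨hm, hc⟩
        refine ⟨?_, hm⟩
        rintro y ⟨i, rfl⟩
        exact (hc i).symm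
end

section
/- Let G be a finite group, H ≤ G a subgroup, and a a commuting n-tuple in G. Then the double coset-style identity holds in the free abelian group on H-conjugacy classes of commuting n-tuples in H: the sum over H-conjugacy classes [b] of n-tuples b in H that are G-conjugate to a, weighted by the index |C_G(a) : C_G(a) ∩ gHg⁻¹| (for any g with g⁻¹ag = b), equals the sum over cosets gH ∈ G/H with g⁻¹ag ∈ H of the class [g⁻¹ag]. Equivalently: ∑_{[b]: ∃g, g⁻¹ag=b} |C_G(a)/(C_G(a) ∩ gHg⁻¹)| · [b] = ∑_{gH ∈ G/H, g⁻¹ag ∈ H} [g⁻¹ag]. -/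
/-!
Compare coefficients at a class `q = [g₀⁻¹ a g₀]`. An element `g` conjugates `a` into `H` with
`[g⁻¹ a g] = q` exactly when `g` lies in the double coset `C_G(a) g₀ H`. That double coset is
the preimage in `G` of the `C_G(a)`-orbit of `g₀H` in `G/H`, and the stabilizer of `g₀H` is
`C_G(a) ∩ g₀Hg₀⁻¹`, so it has `|H| · |C_G(a) : C_G(a) ∩ g₀Hg₀⁻¹|` elements.
-/

/-- Commuting `n`-tuples with entries in the subgroup `H`. -/
def CommTupleIn {G : Type*} [Group G] (H : Subgroup G) (n : ℕ) :=
  {b : Fin n → G // (∀ i, b i ∈ H) ∧ ∀ i j, Commute (b i) (b j)}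

/-- `H`-conjugacy of commuting tuples with entries in `H`. -/
def hConjRel {G : Type*} [Group G] (H : Subgroup G) (n : ℕ) :
    CommTupleIn H n → CommTupleIn H n → Prop :=
  fun b b' => ∃ h ∈ H, ∀ i, b'.val i = h⁻¹ * b.val i * h

/-- `H`-conjugacy classes of commuting `n`-tuples in `H`. -/
def HClass {G : Type*} [Group G] (H : Subgroup G) (n : ℕ) := Quot (hConjRel H n)

/-- The `H`-conjugacy class of the tuple `g⁻¹ a g`, for `g` conjugating the commuting
tuple `a` into `H`. -/
def classOf {G : Type*} [Group G] (H : Subgroup G) {n : ℕ} (a : Fin n → G)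
    (hcomm : ∀ i j, Commute (a i) (a j)) (g : G)
    (hmem : ∀ i, g⁻¹ * a i * g ∈ H) : HClass H n :=
  Quot.mk _ ⟨fun i => g⁻¹ * a i * g, hmem, fun i j => by
    show (g⁻¹ * a i * g) * (g⁻¹ * a j * g) = (g⁻¹ * a j * g) * (g⁻¹ * a i * g)
    calc (g⁻¹ * a i * g) * (g⁻¹ * a j * g) = g⁻¹ * (a i * a j) * g := by group
      _ = g⁻¹ * (a j * a i) * g := by rw [(hcomm i j).eq]
      _ = (g⁻¹ * a j * g) * (g⁻¹ * a i * g) := by group⟩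

open DoubleCoset MulAction Subgroup

section CardDoubleCoset

variable {G : Type*} [Group G]

theorem doubleCoset_eq_preimage_orbit (C H : Subgroup G) (g : G) :
    doubleCoset g C H = QuotientGroup.mk ⁻¹' orbit C (g : G ⧸ H) := by
  have hsmul : ∀ c : C, c • (g : G ⧸ H) = ((c * g : G) : G ⧸ H) := fun _ => rfl
  ext x
  simp only [mem_doubleCoset, Set.mem_preimage, mem_orbit_iff, hsmul, Subtype.exists,
    QuotientGroup.eq]
  constructor
  · rintro ⟨c, hc, h, hh, rfl⟩
    exact ⟨c, hc, by simpa [mul_assoc] using hh⟩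
  · rintro ⟨c, hc, he⟩
    exact ⟨c, hc, _, he, by group⟩

theorem relIndex_map_conj_eq_ncard_orbit (C H : Subgroup G) (g : G) :
    (H.map (MulAut.conj g).toMonoidHom).relIndex C = (orbit C (g : G ⧸ H)).ncard := by
  have hstab : stabilizer G (g : G ⧸ H) = H.map (MulAut.conj g).toMonoidHom := by
    have hg : (g : G ⧸ H) = g • ((1 : G) : G ⧸ H) := by
      rw [Quotient.smul_mk, smul_eq_mul, mul_one]
    rw [hg, stabilizer_smul_eq_stabilizer_map_conj, stabilizer_quotient]
  rw [← hstab, relIndex, ← index_stabilizer]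
  rfl

theorem card_doubleCoset (C H : Subgroup G) (g : G) :
    Nat.card (doubleCoset g C H) =
      Nat.card H * (H.map (MulAut.conj g).toMonoidHom).relIndex C := by
  rw [doubleCoset_eq_preimage_orbit, QuotientGroup.card_preimage_mk,
    relIndex_map_conj_eq_ncard_orbit, Nat.card_coe_set_eq]

end CardDoubleCoset

section Conjugation

variable {G : Type*} [Group G] {ι : Type*}

theorem conj_eq_conj_iff_mul_inv_mem_centralizer (a : ι → G) (x y : G) :
    (∀ i, x⁻¹ * a i * x = y⁻¹ * a i * y) ↔ y * x⁻¹ ∈ centralizer (Set.range a) := by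
  rw [mem_centralizer_iff, Set.forall_mem_range]
  refine forall_congr' fun i => ?_
  constructor
  · intro h
    calc a i * (y * x⁻¹) = y * (y⁻¹ * a i * y) * x⁻¹ := by group
      _ = y * x⁻¹ * a i := by rw [← h]; group
  · intro h
    calc x⁻¹ * a i * x = y⁻¹ * (y * x⁻¹ * a i) * x := by group
      _ = y⁻¹ * a i * y := by rw [← h]; group

theorem conj_mem_of_mem_doubleCoset {H : Subgroup G} {a : ι → G} {g₀ g : G}
    (hg₀ : ∀ i, g₀⁻¹ * a i * g₀ ∈ H) (hg : g ∈ doubleCoset g₀ (centralizer (Set.range a)) H)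
    (i : ι) : g⁻¹ * a i * g ∈ H := by
  obtain ⟨c, hc, h, hh, rfl⟩ := mem_doubleCoset.mp hg
  have hconj := (conj_eq_conj_iff_mul_inv_mem_centralizer a (c * g₀ * h) (g₀ * h)).mpr
    (by simpa [mul_assoc] using inv_mem hc)
  rw [hconj i, show (g₀ * h)⁻¹ * a i * (g₀ * h) = h⁻¹ * (g₀⁻¹ * a i * g₀) * h by group]
  exact H.mul_mem (H.mul_mem (H.inv_mem hh) (hg₀ i)) hh

end Conjugation

section ClassOf

variable {G : Type*} [Group G] (H : Subgroup G) {n : ℕ}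

theorem hConjRel_equivalence : Equivalence (hConjRel H n) where
  refl _ := ⟨1, H.one_mem, fun _ => by group⟩
  symm := fun ⟨h, hh, e⟩ => ⟨h⁻¹, H.inv_mem hh, fun i => by rw [e i]; group⟩
  trans := fun ⟨h, hh, e⟩ ⟨k, hk, e'⟩ =>
    ⟨h * k, H.mul_mem hh hk, fun i => by rw [e' i, e i]; group⟩

variable (a : Fin n → G) (hcomm : ∀ i j, Commute (a i) (a j))

theorem classOf_eq_classOf_iff {g g₀ : G} (hg : ∀ i, g⁻¹ * a i * g ∈ H)
    (hg₀ : ∀ i, g₀⁻¹ * a i * g₀ ∈ H) :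
    classOf H a hcomm g hg = classOf H a hcomm g₀ hg₀ ↔
      g ∈ doubleCoset g₀ (centralizer (Set.range a)) H := by
  refine ((Quot.eq (r := hConjRel H n)).trans
    (Equivalence.eqvGen_iff (hConjRel_equivalence H))).trans ?_
  change (∃ h ∈ H, ∀ i, g₀⁻¹ * a i * g₀ = h⁻¹ * (g⁻¹ * a i * g) * h) ↔ _
  simp_rw [show ∀ h i, h⁻¹ * (g⁻¹ * a i * g) * h = (g * h)⁻¹ * a i * (g * h) from
    fun _ _ => by group, conj_eq_conj_iff_mul_inv_mem_centralizer, mem_doubleCoset]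
  constructor
  · rintro ⟨h, hh, hc⟩
    exact ⟨_, hc, h⁻¹, H.inv_mem hh, by group⟩
  · rintro ⟨c, hc, h, hh, rfl⟩
    exact ⟨h⁻¹, H.inv_mem hh, by simpa [mul_assoc] using hc⟩

theorem card_classOf_fiber {g₀ : G} (hg₀ : ∀ i, g₀⁻¹ * a i * g₀ ∈ H) {q : HClass H n}
    (hq : classOf H a hcomm g₀ hg₀ = q) :
    Nat.card {g // ∃ hg : ∀ i, g⁻¹ * a i * g ∈ H, classOf H a hcomm g hg = q} =
      Nat.card H * (H.map (MulAut.conj g₀).toMonoidHom).relIndex (centralizer (Set.range a)) := by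
  subst hq
  rw [← card_doubleCoset]
  exact Nat.card_congr <| Equiv.subtypeEquivRight fun g =>
    ⟨fun ⟨hg, hclass⟩ => (classOf_eq_classOf_iff H a hcomm hg hg₀).mp hclass,
      fun hmem => ⟨conj_mem_of_mem_doubleCoset hg₀ hmem,
        (classOf_eq_classOf_iff H a hcomm _ hg₀).mpr hmem⟩⟩

end ClassOf

section Coefficients

variable {α β M : Type*} [Fintype α]

theorem sum_ite_single_apply [AddCommMonoid M] (P : α → Prop) [DecidablePred P] (f : α → M)
    (a₀ : α) :
    (∑ a, if P a then Finsupp.single a (f a) else 0) a₀ = if P a₀ then f a₀ else 0 := by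
  rw [Finsupp.finsetSum_apply, Finset.sum_eq_single_of_mem a₀ (Finset.mem_univ _)]
  · split_ifs <;> simp
  · intro a _ ha
    split_ifs <;> simp [Finsupp.single_eq_of_ne' ha]

theorem sum_dite_single_one_apply (P : α → Prop) [DecidablePred P] (f : ∀ a, P a → β)
    (b : β) :
    (∑ a, if h : P a then Finsupp.single (f a h) (1 : ℤ) else 0) b =
      Nat.card {a // ∃ h : P a, f a h = b} := by
  classical
  rw [Finsupp.finsetSum_apply, Nat.card_eq_fintype_card, Fintype.card_subtype,
    Finset.natCast_card_filter]
  refine Finset.sum_congr rfl fun a _ => ?_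
  by_cases h : P a <;> simp [h, Finsupp.single_apply]

end Coefficients

open scoped Classical in
/-- The double-coset style identity in the free abelian group on `H`-conjugacy classes of
commuting `n`-tuples in `H`: the sum over classes `[b]` that are `G`-conjugate to `a`,
weighted by `|C_G(a) : C_G(a) ∩ gHg⁻¹|` (for any `g` with `g⁻¹ag = b`), equals the sum
over cosets `gH` with `g⁻¹ag ∈ H` of `[g⁻¹ag]` (both sides scaled by `|H|` so that the
right-hand side may be written as a sum over elements `g ∈ G`). -/
theorem transfer_class_function_formula {G : Type*} [Group G] [Fintype G]
    (H : Subgroup G) {n : ℕ}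
    (a : Fin n → G) (hcomm : ∀ i j, Commute (a i) (a j))
    [Fintype (HClass H n)]
    (sel : HClass H n → G)
    (hsel : ∀ q : HClass H n,
      (∃ (g : G) (hg : ∀ i, g⁻¹ * a i * g ∈ H), classOf H a hcomm g hg = q) →
      ∃ hg : ∀ i, (sel q)⁻¹ * a i * (sel q) ∈ H, classOf H a hcomm (sel q) hg = q) :
    Nat.card H •
      (∑ q : HClass H n,
        if (∃ (g : G) (hg : ∀ i, g⁻¹ * a i * g ∈ H), classOf H a hcomm g hg = q) then
          Finsupp.single q
            ((Subgroup.relIndex (Subgroup.map (MulAut.conj (sel q)).toMonoidHom H)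
                (Subgroup.centralizer (Set.range a)) : ℤ))
        else (0 : HClass H n →₀ ℤ))
    = ∑ g : G,
        if hg : ∀ i, g⁻¹ * a i * g ∈ H then
          Finsupp.single (classOf H a hcomm g hg) (1 : ℤ)
        else 0 := by
  ext q
  rw [Finsupp.smul_apply, sum_ite_single_apply, sum_dite_single_one_apply]
  split_ifs with hq
  · obtain ⟨hsel_mem, hsel_class⟩ := hsel q hq
    rw [card_classOf_fiber H a hcomm hsel_mem hsel_class, nsmul_eq_mul, Nat.cast_mul]
  · rw [smul_zero, eq_comm, Nat.cast_eq_zero, Nat.card_eq_zero]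
    exact .inl ⟨fun ⟨g, hg, hclass⟩ => hq ⟨g, hg, hclass⟩⟩
end

section
/- Let G and H be finite groups and M an H-free (G,H)-biset. Let a be a commuting n-tuple in G. Then the natural map from the disjoint union, over H-conjugacy classes of commuting n-tuples b in H (one representative each), of the quotients {m ∈ M | a_im = mb_i ∀i}/C_H(b) to the set {mH ∈ M/H | a·(mH) = mH, i.e. a_i m H = mH ∀i} of a-fixed H-orbits of M, sending the class of m to mH, is a well-defined bijection (and is C_G(a)-equivariant for the left actions). -/
open MulOpposite

/-- For an `H`-free `(G,H)`-biset `M` and a commuting `n`-tuple `a` in `G`, the map from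
the disjoint union, over a set `Reps` of representatives of the `H`-conjugacy classes of
commuting `n`-tuples `b` in `H`, of the quotients `{m | aᵢm = mbᵢ ∀i}/C_H(b)`, to the
set of `a`-fixed `H`-orbits of `M`, sending the class of `m` to the orbit `mH`, is a
well-defined bijection. -/
theorem fixed_orbits_bijection {G H M : Type*} [Group G] [Group H]
    [Fintype G] [Fintype H]
    [MulAction G M] [MulAction Hᵐᵒᵖ M] [SMulCommClass G Hᵐᵒᵖ M]
    (hfree : ∀ (m : M) (h : H), op h • m = m → h = 1)
    {n : ℕ} (a : Fin n → G) (hca : ∀ i j, Commute (a i) (a j))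
    (Reps : Set (Fin n → H))
    (hreps_comm : ∀ b ∈ Reps, ∀ i j, Commute (b i) (b j))
    (hreps : ∀ b : Fin n → H, (∀ i j, Commute (b i) (b j)) →
      ∃! b' : Fin n → H, b' ∈ Reps ∧ ∃ h : H, ∀ i, b' i = h⁻¹ * b i * h) :
    ∃ e : (Σ b : Reps,
            Quot (fun m m' : {m : M // ∀ i, a i • m = op (b.val i) • m} =>
              ∃ h ∈ Subgroup.centralizer (Set.range b.val),
                m'.val = op h • m.val)) →
          {ω : Quot (fun m m' : M => ∃ h : H, m' = op h • m) //
            ∀ m : M, Quot.mk _ m = ω → ∀ i, ∃ h : H, a i • m = op h • m},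
      Function.Bijective e ∧
      ∀ (b : Reps) (m : {m : M // ∀ i, a i • m = op (b.val i) • m}),
        (e ⟨b, Quot.mk _ m⟩).val = Quot.mk _ m.val := by
  classical
  set r : M → M → Prop := fun m m' => ∃ h : H, m' = op h • m with hrdef
  have hss : ∀ (m : M) (x y : H), op x • op y • m = op (y * x) • m := by
    intro m x y; rw [smul_smul, ← op_mul]
  have hr_equiv : Equivalence r := by
    constructor
    · exact fun m => ⟨1, by simp⟩
    · rintro m m' ⟨h, rfl⟩; exact ⟨h⁻¹, by rw [hss]; simp⟩
    · rintro m m' m'' ⟨h, rfl⟩ ⟨h', rfl⟩; exact ⟨h * h', hss m h' h⟩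
  have hexact : ∀ m m' : M, Quot.mk r m = Quot.mk r m' → r m m' := by
    intro m m' hq
    exact hr_equiv.eqvGen_iff.mp (Quot.eqvGen_exact hq)
  have cancel : ∀ (m : M) (x y : H), op x • m = op y • m → x = y := by
    intro m x y hxy
    have h1 : op (x * y⁻¹) • m = m := by
      rw [← hss m y⁻¹ x, hxy, hss]; simp
    exact mul_inv_eq_one.mp (hfree m (x * y⁻¹) h1)
  have key : ∀ (b : Reps) (m : {m : M // ∀ i, a i • m = op (b.val i) • m}),
      ∀ m' : M, Quot.mk r m' = Quot.mk r m.val → ∀ i, ∃ h : H, a i • m' = op h • m' := by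
    intro b m m' hq i
    obtain ⟨h, hh⟩ := hexact _ _ hq
    have hm' : m' = op h⁻¹ • m.val := by rw [hh, hss]; simp
    refine ⟨h * b.val i * h⁻¹, ?_⟩
    rw [hm', smul_comm, m.2 i, hss, hss]
    congr 1
    group
  refine ⟨fun p => ⟨Quot.lift (fun m => Quot.mk r m.val)
      (by rintro m m' ⟨h, -, hh⟩; exact Quot.sound ⟨h, hh⟩) p.2, ?_⟩, ⟨?_, ?_⟩, ?_⟩
  · obtain ⟨b, q⟩ := p
    induction q using Quot.ind with
    | _ m => exact key b m
  · -- injective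
    rintro ⟨b, q⟩ ⟨b', q'⟩
    induction q using Quot.ind with
    | _ m =>
    induction q' using Quot.ind with
    | _ m' =>
    intro hE
    have hq : Quot.mk r m.val = Quot.mk r m'.val := congrArg Subtype.val hE
    obtain ⟨h, hh⟩ := hexact _ _ hq
    have hb : ∀ i, b'.val i = h⁻¹ * b.val i * h := by
      intro i
      have h1 : a i • m'.val = op (b.val i * h) • m.val := by
        rw [hh, smul_comm, m.2 i, hss]
      have h2 : a i • m'.val = op (h * b'.val i) • m.val := by
        rw [m'.2 i, hh, hss]
      have heq : b.val i * h = h * b'.val i := cancel m.val _ _ (h1.symm.trans h2)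
      calc b'.val i = h⁻¹ * (h * b'.val i) := by group
        _ = h⁻¹ * (b.val i * h) := by rw [heq]
        _ = h⁻¹ * b.val i * h := by group
    obtain ⟨c, -, hcuniq⟩ := hreps b.val (hreps_comm _ b.2)
    have e1 : b.val = c := hcuniq b.val ⟨b.2, 1, by intro i; group⟩
    have e2 : b'.val = c := hcuniq b'.val ⟨b'.2, h, hb⟩
    have hbb : b = b' := Subtype.ext (e1.trans e2.symm)
    subst hbb
    have hmem : h ∈ Subgroup.centralizer (Set.range b.val) := by
      rw [Subgroup.mem_centralizer_iff]
      rintro g ⟨i, rfl⟩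
      have hbi := hb i
      calc b.val i * h = h * (h⁻¹ * b.val i * h) := by group
        _ = h * b.val i := by rw [← hbi]
    exact congrArg (Sigma.mk b) (Quot.sound ⟨h, hmem, hh⟩)
  · -- surjective
    rintro ⟨ω, hω⟩
    induction ω using Quot.ind with
    | _ m =>
    choose c hc using hω m rfl
    have hccomm : ∀ i j, Commute (c i) (c j) := by
      intro i j
      apply cancel m
      have h1 : a i • a j • m = op (c i * c j) • m := by
        rw [hc j, smul_comm, hc i, hss]
      have h2 : a j • a i • m = op (c j * c i) • m := by
        rw [hc i, smul_comm, hc j, hss]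
      rw [← h1, ← h2, ← mul_smul, ← mul_smul, (hca i j).eq]
    obtain ⟨b, ⟨hbR, h, hb⟩, -⟩ := hreps c hccomm
    have hm' : ∀ i, a i • (op h • m) = op (b i) • (op h • m) := by
      intro i
      rw [smul_comm, hc i, hss, hss, hb i]
      congr 1
      group
    refine ⟨⟨⟨b, hbR⟩, Quot.mk _ ⟨op h • m, hm'⟩⟩, ?_⟩
    refine Subtype.ext ?_
    exact (Quot.sound ⟨h, rfl⟩).symm
  · intro b m
    rfl
end
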